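/- arXiv:1310.8458 — 2 statements merged into one kernel-verified Lean document; each statement's English description precedes it below -/
import Mathlib

section
/- Let γ > 0 and let s, v, w be real numbers, and let p, q be real numbers with p - q = s and p + q ≥ γ|s|. Then (1/2)·s·v² + (w - v)·(p·w - q·v) ≥ (γ/2)·|s|·(w - v)² + (1/2)·s·w². -/
/-- Pointwise inequality giving the coercivity of the convective part:
if `p - q = s` and `p + q ≥ γ|s|` with `γ > 0`, then
`(1/2) s v² + (w - v)(p w - q v) ≥ (γ/2)|s|(w - v)² + (1/2) s w²`. -/
theorem convective_face_coercivity (γ s v w p q : ℝ) (hγ : 0 < γ)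
    (hpq : p - q = s) (hpq' : p + q ≥ γ * |s|) :
    (1 / 2) * s * v ^ 2 + (w - v) * (p * w - q * v)
      ≥ (γ / 2) * |s| * (w - v) ^ 2 + (1 / 2) * s * w ^ 2 := by
  nlinarith [sq_nonneg (w - v), mul_nonneg (sub_nonneg.2 hpq') (sq_nonneg (w - v))]
end

section
/- Let V be a real vector space with seminorms N_d, N and N_* satisfying N_d(v) ≤ N(v) ≤ N_*(v) for all v ∈ V, let V_h ⊆ V be a subspace, and let B_d, B_{rc} be bilinear forms on V with B = B_d + B_{rc}. Let u_0 ∈ V, and let u_h, P u_0 ∈ V_h. Suppose: (i) B(u_h, v_h) = L(v_h) for all v_h ∈ V_h, for a linear functional L on V_h; (ii) B_{rc}(u_0, v_h) = L(v_h) for all v_h ∈ V_h (consistency of the reduced problem), so that B(u_0 - u_h, v_h) = B_d(u_0, v_h) for all v_h ∈ V_h; (iii) coercivity, there is C_c > 0 with B(v_h, v_h) ≥ C_c · N(v_h)² for all v_h ∈ V_h; (iv) there is C_b^d ≥ 0 with |B_d(u_0, w_h)| ≤ C_b^d · N_d(u_0) · N_d(w_h) for all w_h ∈ V_h; (v) there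 is C_b ≥ 0 with |B(u_0 - P u_0, w_h)| ≤ C_b · N_*(u_0 - P u_0) · N(w_h) for all w_h ∈ V_h. Then N(u_h - u_0) ≤ (C_b^d / C_c) · N_d(u_0) + (1 + C_b / C_c) · N_*(u_0 - P u_0). -/
/-!
Put `e = u_h - P u₀ ∈ V_h`. Subtracting the reduced problem from the discrete one gives
`B(u_h - u₀, e) = -B_d(u₀, e)`, so `B(e, e) = -B_d(u₀, e) + B(u₀ - P u₀, e)`. Coercivity and the two
continuity bounds give `C_c N(e)² ≤ (C_b^d N_d(u₀) + C_b N_*(u₀ - P u₀)) N(e)`, hence a bound on `N(e)`,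
and the triangle inequality `N(u_h - u₀) ≤ N(e) + N(u₀ - P u₀)` finishes the proof.
-/

lemma le_div_of_mul_sq_le_mul {c K x : ℝ} (hc : 0 < c) (hK : 0 ≤ K) (hx : 0 ≤ x)
    (h : c * x ^ 2 ≤ K * x) : x ≤ K / c := by
  rcases hx.eq_or_lt with rfl | hx
  · positivity
  · rw [le_div_iff₀ hc, mul_comm]
    nlinarith

lemma map_sub_apply_eq_neg_of_consistent {V : Type*} [AddCommGroup V] [Module ℝ V]
    {Vh : Submodule ℝ V} {Bd Brc B : V →ₗ[ℝ] V →ₗ[ℝ] ℝ} (hB : B = Bd + Brc)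
    {u₀ uh : V} {L : Vh →ₗ[ℝ] ℝ}
    (hdisc : ∀ vh : Vh, B uh (vh : V) = L vh) (hcons : ∀ vh : Vh, Brc u₀ (vh : V) = L vh)
    (vh : Vh) : B (uh - u₀) vh = -Bd u₀ vh := by
  have hu₀ : B u₀ vh = Bd u₀ vh + Brc u₀ vh := by simp [hB]
  rw [map_sub, LinearMap.sub_apply, hdisc, hu₀, hcons]
  ring

/-- Abstract version of the theorem relating the hybridized DG approximation `u_h`
to the solution `u₀` of the reduced (purely convective) problem:
`N(u_h - u₀) ≤ (C_b^d/C_c) N_d(u₀) + (1 + C_b/C_c) N_*(u₀ - P u₀)`. -/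
theorem hdg_reduced_problem_bound {V : Type*} [AddCommGroup V] [Module ℝ V]
    (Nd N Ns : Seminorm ℝ V)
    (hNdN : ∀ v : V, Nd v ≤ N v) (hNNs : ∀ v : V, N v ≤ Ns v)
    (Vh : Submodule ℝ V)
    (Bd Brc : V →ₗ[ℝ] V →ₗ[ℝ] ℝ)
    (B : V →ₗ[ℝ] V →ₗ[ℝ] ℝ) (hB : B = Bd + Brc)
    (u₀ uh Pu₀ : V) (huh : uh ∈ Vh) (hPu₀ : Pu₀ ∈ Vh)
    (L : Vh →ₗ[ℝ] ℝ)
    (Cc Cbd Cb : ℝ) (hCc : 0 < Cc) (hCbd : 0 ≤ Cbd) (hCb : 0 ≤ Cb)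
    (hdisc : ∀ vh : Vh, B uh (vh : V) = L vh)
    (hcons : ∀ vh : Vh, Brc u₀ (vh : V) = L vh)
    (hcoer : ∀ vh ∈ Vh, B vh vh ≥ Cc * (N vh) ^ 2)
    (hbddd : ∀ wh ∈ Vh, |Bd u₀ wh| ≤ Cbd * Nd u₀ * Nd wh)
    (hbdd : ∀ wh ∈ Vh, |B (u₀ - Pu₀) wh| ≤ Cb * Ns (u₀ - Pu₀) * N wh) :
    N (uh - u₀) ≤ (Cbd / Cc) * Nd u₀ + (1 + Cb / Cc) * Ns (u₀ - Pu₀) := by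
  set e := uh - Pu₀
  have he : e ∈ Vh := Vh.sub_mem huh hPu₀
  have hsplit : B e e = -Bd u₀ e + B (u₀ - Pu₀) e := by
    rw [← map_sub_apply_eq_neg_of_consistent hB hdisc hcons ⟨e, he⟩, ← LinearMap.add_apply,
      ← map_add, sub_add_sub_cancel]
  have hK : 0 ≤ Cbd * Nd u₀ + Cb * Ns (u₀ - Pu₀) := by positivity
  have henergy : Cc * N e ^ 2 ≤ (Cbd * Nd u₀ + Cb * Ns (u₀ - Pu₀)) * N e := by
    have hdiff : Cbd * Nd u₀ * Nd e ≤ Cbd * Nd u₀ * N e := by gcongr; exact hNdN e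
    calc Cc * N e ^ 2 ≤ -Bd u₀ e + B (u₀ - Pu₀) e := hsplit ▸ hcoer e he
      _ ≤ |Bd u₀ e| + |B (u₀ - Pu₀) e| := add_le_add (neg_le_abs _) (le_abs_self _)
      _ ≤ Cbd * Nd u₀ * N e + Cb * Ns (u₀ - Pu₀) * N e :=
        add_le_add ((hbddd e he).trans hdiff) (hbdd e he)
      _ = (Cbd * Nd u₀ + Cb * Ns (u₀ - Pu₀)) * N e := by ring
  have hNe := le_div_of_mul_sq_le_mul hCc hK (apply_nonneg N e) henergy
  calc N (uh - u₀) = N (e - (u₀ - Pu₀)) := by rw [sub_sub_sub_cancel_right]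
    _ ≤ N e + N (u₀ - Pu₀) := map_sub_le_add N _ _
    _ ≤ (Cbd * Nd u₀ + Cb * Ns (u₀ - Pu₀)) / Cc + Ns (u₀ - Pu₀) := add_le_add hNe (hNNs _)
    _ = (Cbd / Cc) * Nd u₀ + (1 + Cb / Cc) * Ns (u₀ - Pu₀) := by ring
end
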